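/- The fixed-point system defining the deterministic equivalents has exactly one entrywise-positive solution: there exists a unique pair (φ, ψ) ∈ (0,∞)^K × (0,∞)^N such that φ_i · α(1 + N⁻¹ Σ_{j=1}^{N} θ_{ij} ψ_j) = 1 for all 1 ≤ i ≤ K and ψ_j · α(1 + N⁻¹ Σ_{i=1}^{K} θ_{ij} φ_i) = 1 for all 1 ≤ j ≤ N. -/

import Mathlib

/-!
Write `R_A x = (α (1 + A x))⁻¹` entrywise. With `A = θ / N` the system is `φ = R_A ψ`,
`ψ = R_{Aᵀ} φ`, so `ψ` is a fixed point of `T = R_{Aᵀ} ∘ R_A`. Each `R` is antitone on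
nonnegative vectors with values in `(0, α⁻¹]`, hence `T` is a monotone self-map of the box
`[0, α⁻¹]^N` and has a fixed point by Knaster–Tarski. Moreover `x ≤ t y` with `t > 1` forces
`R y < t R x`, since `α (1 + t s) < t α (1 + s)`; applied twice, `T` is strictly
subhomogeneous. If `ψ'` and `ψ` are positive fixed points and `t = max_j ψ'_j / ψ_j > 1`, then
`ψ' = T ψ' < t T ψ = t ψ` contradicts the maximality of `t`, so `ψ' ≤ ψ`, and symmetrically.
-/

open Matrix Set Function

theorem exists_isFixedPt_of_monotoneOn_Icc {α : Type*} [ConditionallyCompleteLattice α]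
    {a b : α} (hab : a ≤ b) {f : α → α} (hf : MonotoneOn f (Icc a b))
    (hmaps : MapsTo f (Icc a b) (Icc a b)) : ∃ x ∈ Icc a b, IsFixedPt f x := by
  have := Fact.mk hab
  let g : Icc a b →o Icc a b := ⟨hmaps.restrict, fun x y hxy => hf x.2 y.2 hxy⟩
  exact ⟨_, (OrderHom.lfp g).2, congrArg Subtype.val g.map_lfp⟩

variable {ι κ : Type*} [Fintype κ]

/-- Monotonicity and strict subhomogeneity `T (t • y) < t • T y` (`t > 1`) in one condition. -/
def IsStrictlySubhomogeneous (T : (κ → ℝ) → κ → ℝ) : Prop :=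
  ∀ ⦃x y⦄, 0 ≤ x → 0 ≤ y → ∀ ⦃t : ℝ⦄, 1 < t → x ≤ t • y → ∀ j, T x j < t * T y j

theorem IsStrictlySubhomogeneous.le_of_isFixedPt {T : (κ → ℝ) → κ → ℝ}
    (hT : IsStrictlySubhomogeneous T) {x y : κ → ℝ} (hx : IsFixedPt T x) (hy : IsFixedPt T y)
    (hx0 : 0 ≤ x) (hy0 : ∀ j, 0 < y j) : x ≤ y := by
  intro j
  by_contra! hyx
  obtain ⟨j₀, -, hj₀⟩ :=
    Finset.univ.exists_max_image (fun k => x k / y k) ⟨j, Finset.mem_univ j⟩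
  set t := x j₀ / y j₀
  have ht : 1 < t := ((one_lt_div (hy0 j)).2 hyx).trans_le (hj₀ j (Finset.mem_univ j))
  have hxt : x ≤ t • y := fun k => (div_le_iff₀ (hy0 k)).1 (hj₀ k (Finset.mem_univ k))
  have hlt := hT hx0 (fun k => (hy0 k).le) ht hxt j₀
  rw [hx.eq, hy.eq, div_mul_cancel₀ _ (hy0 j₀).ne'] at hlt
  exact hlt.false

/-- The system reads `φ = detEqMap α (N⁻¹ • θ) ψ`, `ψ = detEqMap α (N⁻¹ • θ)ᵀ φ`. -/
noncomputable def detEqMap (α : ℝ) (A : Matrix ι κ ℝ) (x : κ → ℝ) : ι → ℝ :=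
  fun i => (α * (1 + (A *ᵥ x) i))⁻¹

section detEqMap

variable {α : ℝ} {A : Matrix ι κ ℝ} {x y : κ → ℝ}

theorem mulVec_apply_nonneg (hA : ∀ i j, 0 ≤ A i j) (hx : 0 ≤ x) (i : ι) : 0 ≤ (A *ᵥ x) i :=
  dotProduct_nonneg_of_nonneg (hA i) hx

theorem mulVec_apply_mono (hA : ∀ i j, 0 ≤ A i j) (hxy : x ≤ y) (i : ι) :
    (A *ᵥ x) i ≤ (A *ᵥ y) i :=
  dotProduct_le_dotProduct_of_nonneg_left hxy (hA i)

theorem detEqMap_pos (hα : 0 < α) (hA : ∀ i j, 0 ≤ A i j) (hx : 0 ≤ x) (i : ι) :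
    0 < detEqMap α A x i := by
  have := mulVec_apply_nonneg hA hx i
  unfold detEqMap
  positivity

theorem detEqMap_le_inv (hα : 0 < α) (hA : ∀ i j, 0 ≤ A i j) (hx : 0 ≤ x) (i : ι) :
    detEqMap α A x i ≤ α⁻¹ := by
  have := mulVec_apply_nonneg hA hx i
  exact inv_anti₀ hα (by nlinarith)

theorem detEqMap_anti (hα : 0 < α) (hA : ∀ i j, 0 ≤ A i j) (hx : 0 ≤ x) (hxy : x ≤ y) :
    detEqMap α A y ≤ detEqMap α A x := by
  intro i
  have := mulVec_apply_nonneg hA hx i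
  have := mulVec_apply_mono hA hxy i
  exact inv_anti₀ (by positivity) (by gcongr)

theorem detEqMap_lt_mul (hα : 0 < α) (hA : ∀ i j, 0 ≤ A i j) (hx : 0 ≤ x) {t : ℝ}
    (ht : 1 < t) (hxy : x ≤ t • y) (i : ι) : detEqMap α A y i < t * detEqMap α A x i := by
  have hAx := mulVec_apply_nonneg hA hx i
  have hAxy : (A *ᵥ x) i ≤ t * (A *ᵥ y) i := by
    simpa [Matrix.mulVec_smul] using mulVec_apply_mono hA hxy i
  have hD : 0 < α * (1 + (A *ᵥ x) i) := by positivity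
  have hDE : α * (1 + (A *ᵥ x) i) < t * (α * (1 + (A *ᵥ y) i)) := by nlinarith
  rw [detEqMap, detEqMap, ← div_eq_mul_inv, lt_div_iff₀ hD, inv_mul_lt_iff₀ (by nlinarith)]
  linarith

theorem eq_detEqMap_iff (hα : 0 < α) (hA : ∀ i j, 0 ≤ A i j) (hy : 0 ≤ y) {x : ι → ℝ} :
    x = detEqMap α A y ↔ ∀ i, x i * (α * (1 + (A *ᵥ y) i)) = 1 := by
  rw [funext_iff]
  refine forall_congr' fun i => (mul_eq_one_iff_eq_inv₀ ?_).symm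
  have := mulVec_apply_nonneg hA hy i
  positivity

variable [Fintype ι] {B : Matrix κ ι ℝ}

theorem detEqMap_comp_pos (hα : 0 < α) (hA : ∀ i j, 0 ≤ A i j) (hB : ∀ j i, 0 ≤ B j i)
    (hx : 0 ≤ x) (j : κ) : 0 < detEqMap α B (detEqMap α A x) j :=
  detEqMap_pos hα hB (fun i => (detEqMap_pos hα hA hx i).le) j

theorem detEqMap_comp_mono (hα : 0 < α) (hA : ∀ i j, 0 ≤ A i j) (hB : ∀ j i, 0 ≤ B j i)
    (hx : 0 ≤ x) (hxy : x ≤ y) :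
    detEqMap α B (detEqMap α A x) ≤ detEqMap α B (detEqMap α A y) :=
  detEqMap_anti hα hB (fun i => (detEqMap_pos hα hA (hx.trans hxy) i).le)
    (detEqMap_anti hα hA hx hxy)

theorem isStrictlySubhomogeneous_detEqMap_comp (hα : 0 < α) (hA : ∀ i j, 0 ≤ A i j)
    (hB : ∀ j i, 0 ≤ B j i) :
    IsStrictlySubhomogeneous (detEqMap α B ∘ detEqMap α A) :=
  fun _ _ hx hy _ ht hxy =>
    detEqMap_lt_mul hα hB (fun i => (detEqMap_pos hα hA hy i).le) ht
      fun i => (detEqMap_lt_mul hα hA hx ht hxy i).le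

theorem exists_isFixedPt_detEqMap_comp (hα : 0 < α) (hA : ∀ i j, 0 ≤ A i j)
    (hB : ∀ j i, 0 ≤ B j i) : ∃ x, 0 ≤ x ∧ IsFixedPt (detEqMap α B ∘ detEqMap α A) x := by
  obtain ⟨x, hx, hfix⟩ := exists_isFixedPt_of_monotoneOn_Icc (b := fun _ => α⁻¹)
    (fun _ => inv_nonneg.2 hα.le) (fun _ hx _ _ hxy => detEqMap_comp_mono hα hA hB hx.1 hxy)
    fun _ hx => ⟨fun j => (detEqMap_comp_pos hα hA hB hx.1 j).le,
      detEqMap_le_inv hα hB fun i => (detEqMap_pos hα hA hx.1 i).le⟩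
  exact ⟨x, hx.1, hfix⟩

end detEqMap

theorem existsUnique_pos_detEqMap_fixedPoint [Fintype ι] {α : ℝ} (hα : 0 < α)
    {A : Matrix ι κ ℝ} (hA : ∀ i j, 0 ≤ A i j) :
    ∃! p : (ι → ℝ) × (κ → ℝ), (∀ i, 0 < p.1 i) ∧ (∀ j, 0 < p.2 j) ∧
      p.1 = detEqMap α A p.2 ∧ p.2 = detEqMap α Aᵀ p.1 := by
  have hAt : ∀ j i, 0 ≤ Aᵀ j i := fun j i => hA i j
  have hT := isStrictlySubhomogeneous_detEqMap_comp hα hA hAt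
  obtain ⟨ψ, hψ0, hψ⟩ := exists_isFixedPt_detEqMap_comp hα hA hAt
  have hψpos : ∀ j, 0 < ψ j := fun j => hψ.eq ▸ detEqMap_comp_pos hα hA hAt hψ0 j
  refine ⟨(detEqMap α A ψ, ψ), ⟨detEqMap_pos hα hA hψ0, hψpos, rfl, hψ.symm⟩, ?_⟩
  rintro p ⟨-, hψ'pos, hφ', hψ'⟩
  have hψ' : IsFixedPt (detEqMap α Aᵀ ∘ detEqMap α A) p.2 :=
    (hψ'.trans (congrArg _ hφ')).symm
  have hψ'ψ : p.2 = ψ :=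
    (hT.le_of_isFixedPt hψ' hψ (fun j => (hψ'pos j).le) hψpos).antisymm
      (hT.le_of_isFixedPt hψ hψ' hψ0 hψ'pos)
  exact Prod.ext (hφ'.trans (congrArg _ hψ'ψ)) hψ'ψ

theorem fixed_point_existence_uniqueness_general
    (K N : ℕ)
    (θ : Matrix (Fin K) (Fin N) ℝ) (hθ : ∀ i j, 0 ≤ θ i j)
    (α : ℝ) (hα : 0 < α) :
    ∃! p : (Fin K → ℝ) × (Fin N → ℝ),
      (∀ i, 0 < p.1 i) ∧ (∀ j, 0 < p.2 j) ∧
      (∀ i, p.1 i * (α * (1 + (N : ℝ)⁻¹ * ∑ j, θ i j * p.2 j)) = 1) ∧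
      (∀ j, p.2 j * (α * (1 + (N : ℝ)⁻¹ * ∑ i, θ i j * p.1 i)) = 1) := by
  have hA : ∀ i j, 0 ≤ ((N : ℝ)⁻¹ • θ) i j := fun i j => mul_nonneg (by positivity) (hθ i j)
  refine (existsUnique_congr fun p => ?_).mp (existsUnique_pos_detEqMap_fixedPoint hα hA)
  refine and_congr_right fun hφ => and_congr_right fun hψ => and_congr ?_ ?_
  · rw [eq_detEqMap_iff hα hA fun j => (hψ j).le]
    simp only [mulVec, dotProduct, Matrix.smul_apply, smul_eq_mul, mul_assoc, ← Finset.mul_sum]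
  · rw [eq_detEqMap_iff (A := ((N : ℝ)⁻¹ • θ)ᵀ) hα (fun j i => hA i j) fun i => (hφ i).le]
    simp only [mulVec, dotProduct, transpose_apply, Matrix.smul_apply, smul_eq_mul, mul_assoc,
      ← Finset.mul_sum]

/-- **Existence and uniqueness of the entrywise-positive fixed point** of the
deterministic-equivalent system (7)–(8) at `z = −α`: there is exactly one pair
`(φ, ψ)` with all entries positive satisfying
`φ_i · α(1 + N⁻¹ Σ_j θ_{ij} ψ_j) = 1` and `ψ_j · α(1 + N⁻¹ Σ_i θ_{ij} φ_i) = 1`. -/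
theorem fixed_point_existence_uniqueness
    (K N : ℕ) (hK : 0 < K) (hN : 0 < N)
    (θ : Matrix (Fin K) (Fin N) ℝ) (hθ : ∀ i j, 0 ≤ θ i j)
    (α : ℝ) (hα : 0 < α) :
    ∃! p : (Fin K → ℝ) × (Fin N → ℝ),
      (∀ i, 0 < p.1 i) ∧ (∀ j, 0 < p.2 j) ∧
      (∀ i, p.1 i * (α * (1 + (N : ℝ)⁻¹ * ∑ j, θ i j * p.2 j)) = 1) ∧
      (∀ j, p.2 j * (α * (1 + (N : ℝ)⁻¹ * ∑ i, θ i j * p.1 i)) = 1) :=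
  fixed_point_existence_uniqueness_general K N θ hθ α hα
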